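/- In the ring of formal power series ℤ[[X]], the generating function F_e(X) = Σ_{ℓ≥1} e(ℓ)·X^ℓ of the numbers e(ℓ) of EVEN colored compositions satisfies (1 − 3X + 2X² − X³)·F_e(X) = X − X² + X³. -/

import Mathlib

/-!
Split off the first part of a composition. Writing `E` for the generating series of even colored
compositions (the empty one included) and `O` for that of the odd colored ones, this gives
`E = 1 + X/(1-X) · O` and `O = 1 + X/(1-X)² · E`, since a part `p` carries `1` resp. `p` colors.
Eliminating `O` yields `(1 - 3X + 2X² - X³) E = (1 - X)²`, and `F_e = E - 1`.
-/

/-- The number of EVEN colored compositions of `ℓ`: compositions where each part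
in an even position `i` (positions counted from 1) gets a color in `{1, …, pᵢ}`,
i.e. `∑` over compositions of `∏` of the parts in even positions. -/
def evenColoredCount (ℓ : ℕ) : ℕ :=
  ∑ c : Composition ℓ, ∏ i ∈ Finset.range c.blocks.length,
    if (i + 1) % 2 = 0 then c.blocks.getD i 1 else 1

/-- The generating function `F_e(X) = ∑_{ℓ ≥ 1} e(ℓ) Xᶫ ∈ ℤ[[X]]` of the numbers of
EVEN colored compositions; its constant coefficient is `0`. -/
def Fe : PowerSeries ℤ :=
  PowerSeries.mk fun ℓ => if ℓ = 0 then 0 else (evenColoredCount ℓ : ℤ)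

open Finset hiding mk
open PowerSeries

namespace Composition

theorem sum_blocks_zero {M : Type*} [AddCommMonoid M] (f : List ℕ → M) :
    ∑ c : Composition 0, f c.blocks = f [] := by
  have : Subsingleton (Composition 0) :=
    ⟨fun c d => Composition.ext (by rw [c.blocks_eq_nil.mpr rfl, d.blocks_eq_nil.mpr rfl])⟩
  rw [Fintype.sum_subsingleton _ (ones 0), ones_blocks, List.replicate_zero]

theorem sum_blocks_succ {M : Type*} [AddCommMonoid M] (n : ℕ) (f : List ℕ → M) :
    ∑ c : Composition (n + 1), f c.blocks =
      ∑ p ∈ antidiagonal n, ∑ c : Composition p.2, f ((p.1 + 1) :: c.blocks) := by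
  rw [sum_sigma']
  symm
  refine sum_bij
    (fun x hx => ⟨(x.1.1 + 1) :: x.2.blocks,
      by simpa using fun _ => x.2.blocks_pos, by
      have := mem_antidiagonal.mp (mem_sigma.mp hx).1
      simp [x.2.blocks_sum]; omega⟩) (by simp) ?_ ?_ (by simp)
  · rintro ⟨⟨a, b⟩, c⟩ _ ⟨⟨a', b'⟩, c'⟩ _ h
    obtain ⟨rfl, hc⟩ : a = a' ∧ c.blocks = c'.blocks := by simpa [Composition.ext_iff] using h
    obtain rfl : b = b' := (c.blocks_sum.symm.trans (congrArg List.sum hc)).trans c'.blocks_sum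
    obtain rfl : c = c' := Composition.ext hc
    rfl
  · intro c _
    obtain ⟨p, L, hcons⟩ : ∃ p L, c.blocks = p :: L :=
      List.exists_cons_of_ne_nil (by simp [blocks_eq_nil])
    have hp : 0 < p := c.blocks_pos (by simp [hcons])
    have hsum : p + L.sum = n + 1 := by rw [← List.sum_cons, ← hcons, c.blocks_sum]
    refine ⟨⟨(p - 1, L.sum), ⟨L, fun hx => c.blocks_pos (by simp [hcons, hx]), rfl⟩⟩,
      by simp; omega, Composition.ext ?_⟩
    simp only [hcons, List.cons.injEq, and_true]
    omega

end Composition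

def altWeight {M : Type*} [Monoid M] : (ℕ → M) → (ℕ → M) → List ℕ → M
  | _, _, [] => 1
  | u, v, p :: L => u p * altWeight v u L

theorem altWeight_eq_prod {M : Type*} [CommMonoid M] (u v : ℕ → M) (d : ℕ) (L : List ℕ) :
    altWeight u v L =
      ∏ i ∈ range L.length, if Even i then u (L.getD i d) else v (L.getD i d) := by
  induction L generalizing u v with
  | nil => simp [altWeight]
  | cons p L ih =>
    rw [List.length_cons, prod_range_succ', altWeight, ih v u, mul_comm]
    refine congrArg (· * u p) (prod_congr rfl fun i _ => ?_)
    by_cases hi : Even i <;> simp [hi, Nat.even_add_one]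

section Series

variable {R : Type*} [Semiring R]

def altCompositionSeries (u v : ℕ → R) : R⟦X⟧ :=
  mk fun n => ∑ c : Composition n, altWeight u v c.blocks

theorem altCompositionSeries_eq_one_add (u v : ℕ → R) :
    altCompositionSeries u v = 1 + X * mk (fun p => u (p + 1)) * altCompositionSeries v u := by
  ext (_ | n)
  · simp [altCompositionSeries, Composition.sum_blocks_zero, altWeight]
  · rw [map_add, mul_assoc, coeff_succ_X_mul, coeff_mul]
    simp [altCompositionSeries, Composition.sum_blocks_succ, altWeight, mul_sum]

end Series

theorem evenColoredCount_eq_coeff (n : ℕ) :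
    (evenColoredCount n : ℤ) = coeff n (altCompositionSeries 1 (Nat.cast : ℕ → ℤ)) := by
  simp only [evenColoredCount, altCompositionSeries, coeff_mk, Nat.cast_sum, Nat.cast_prod]
  refine sum_congr rfl fun c _ => ?_
  rw [altWeight_eq_prod _ _ 1]
  refine prod_congr rfl fun i _ => ?_
  by_cases hi : Even i <;> simp [hi, Nat.even_add_one, ← Nat.even_iff]

theorem Fe_eq_altCompositionSeries_sub_one :
    Fe = altCompositionSeries 1 (Nat.cast : ℕ → ℤ) - 1 := by
  ext (_ | n)
  · simp [Fe, altCompositionSeries, Composition.sum_blocks_zero, altWeight]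
  · simp [Fe, evenColoredCount_eq_coeff]

/-- `(1 - 3X + 2X² - X³) · F_e(X) = X - X² + X³` in `ℤ[[X]]`. -/
theorem Fe_generating_function :
    (1 - 3 * PowerSeries.X + 2 * PowerSeries.X ^ 2 - PowerSeries.X ^ 3) * Fe =
      PowerSeries.X - PowerSeries.X ^ 2 + PowerSeries.X ^ 3 := by
  set E := altCompositionSeries 1 (Nat.cast : ℕ → ℤ)
  set O := altCompositionSeries (Nat.cast : ℕ → ℤ) 1
  have hE : E = 1 + X * mk 1 * O := altCompositionSeries_eq_one_add _ _
  have hO : O = 1 + X * mk 1 ^ 2 * E := by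
    rw [mk_one_pow_eq_mk_choose_add]
    simpa [add_comm] using altCompositionSeries_eq_one_add (Nat.cast : ℕ → ℤ) 1
  have hA : (mk 1 : ℤ⟦X⟧) * (1 - X) = 1 := mk_one_mul_one_sub_eq_one ℤ
  rw [Fe_eq_altCompositionSeries_sub_one]
  -- the last term uses `(mk 1 * (1 - X)) ^ 2 - 1 = (mk 1 * (1 - X) + 1) * (mk 1 * (1 - X) - 1)`
  linear_combination (1 - X) ^ 3 * hE + X * (1 - X) ^ 2 * O * hA + X * (1 - X) ^ 2 * hO
    + X ^ 2 * E * (mk 1 * (1 - X) + 1) * hA
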